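/- arXiv:1505.02942 — 3 statements merged into one kernel-verified Lean document; each statement's English description precedes it below -/
import Mathlib

section
/- With E a topos, the functor π_* : E^{1,φ} → E sending (X₁, X₀, 1, φ) to the equalizer Ker(1, φ) is right adjoint to the functor π^{-1} : E → E^{1,φ} sending X to (X, X, id_X, id_X), and π^{-1} is left exact, so π is a morphism of topoi with π∘1 ≅ π∘0 ≅ id_E, where 1^{-1}(X₁,X₀,1,φ) = X₁ and 0^{-1}(X₁,X₀,1,φ) = X₀. -/
/-!
STATEMENT 2: With E a topos, the functor π_* : E^{1,φ} → E sending
(X₁, X₀, 1, φ) to the equalizer Ker(1, φ) is right adjoint to the functor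
π^{-1} : E → E^{1,φ} sending X to (X, X, id_X, id_X), and π^{-1} is left
exact, so π is a morphism of topoi with π∘1 ≅ π∘0 ≅ id_E, where
1^{-1}(X₁,X₀,1,φ) = X₁ and 0^{-1}(X₁,X₀,1,φ) = X₀.

We model E^{1,φ} as `WalkingParallelPair ⥤ E` (objects: X₁ at `zero`,
X₀ at `one`, the two maps being the images of `left` and `right`).  Then
`π^{-1}` is the constant-diagram functor, `π_*` is the limit functor (whose
value on a parallel pair is the equalizer), and `1^{-1}`, `0^{-1}` are the
evaluations.  Since E is a topos it has (finite) limits; we record this via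
the corresponding limit hypotheses.
-/

open CategoryTheory CategoryTheory.Limits

theorem pi_adjunction_of_onePhi_topos
    (E : Type u) [Category.{v} E] [HasFiniteLimits E]
    [HasLimitsOfShape WalkingParallelPair E] :
    -- π^{-1} ⊣ π_*  (π_* is the limit functor, i.e. the kernel/equalizer of the pair)
    Nonempty ((Functor.const WalkingParallelPair : E ⥤ WalkingParallelPair ⥤ E) ⊣
        (lim : (WalkingParallelPair ⥤ E) ⥤ E)) ∧
    -- π_* is computed by the equalizer Ker(1,φ)
    (∀ F : WalkingParallelPair ⥤ E,
      Nonempty (lim.obj F ≅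
        equalizer (F.map WalkingParallelPairHom.left) (F.map WalkingParallelPairHom.right))) ∧
    -- π^{-1} is left exact
    PreservesFiniteLimits
      (Functor.const WalkingParallelPair : E ⥤ WalkingParallelPair ⥤ E) ∧
    -- π ∘ 1 ≅ id : the inverse image 1^{-1} ∘ π^{-1} is isomorphic to the identity
    Nonempty ((Functor.const WalkingParallelPair : E ⥤ WalkingParallelPair ⥤ E) ⋙
        (evaluation WalkingParallelPair E).obj WalkingParallelPair.zero ≅ 𝟭 E) ∧
    -- π ∘ 0 ≅ id
    Nonempty ((Functor.const WalkingParallelPair : E ⥤ WalkingParallelPair ⥤ E) ⋙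
        (evaluation WalkingParallelPair E).obj WalkingParallelPair.one ≅ 𝟭 E) := by
  refine ⟨⟨constLimAdj⟩, fun F => ⟨HasLimit.isoOfNatIso (diagramIsoParallelPair F)⟩,
    inferInstance, ⟨NatIso.ofComponents (fun X => Iso.refl _) (by simp)⟩,
    ⟨NatIso.ofComponents (fun X => Iso.refl _) (by simp)⟩⟩
end

section
/- Let k ≥ 1, A a ring of characteristic p in which Frobenius x ↦ x^p is surjective (semi-perfect), W_k(A) the length-k Witt vectors, and I_k(A) = Ker(W_k(A) → A, (x₀,…,x_{k−1}) ↦ x₀^{p^k}). Then (Spec A, Spec W_k^{dp}(A)) — where W_k^{dp}(A) is the divided power envelope of I_k(A) in W_k(A) compatible with the divided powers on (p) — is a final object of the crystalline site of Spec A over Z/p^k: for every Z/p^k-algebra B with pd-ideal J and every ring map f : A → B/J, there is a unique pd-morphism W_k^{dp}(A) → B lifting f. -/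
/-!
Because `p ^ k = 0` in `B` and `n ∣ n!`, divided powers give `p ^ i * j ^ p ^ (k - i) = 0` for
`j ∈ J` and `i ≤ k`. Hence the `k`-th ghost component `W(B) → B` kills every Witt vector whose
first `k` coordinates lie in `J`, and descends to a ring map `θ : W_k(B ⧸ J) → B` with
`θ z ≡ z₀ ^ p ^ k (mod J)`; the lift of `f` is `θ ∘ W_k(f)`.
Applying `θ` to Teichmüller lifts shows that `p ^ k`-th powers of elements congruent modulo `J`
coincide. As `A` is semiperfect, each `[a]` is a `p ^ k`-th power in `W_k(A)`, so two lifts of `f`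
agree on Teichmüller lifts; ring maps out of `W(A)` into a ring where `p` is nilpotent are
determined by their values there (pull back to the perfection of `A`).
-/

namespace DividedPowers

theorem natCast_dvd_pow {B : Type*} [CommRing B] {J : Ideal B} (hJ : DividedPowers J) {j : B}
    (hj : j ∈ J) {n : ℕ} (hn : n ≠ 0) : (n : B) ∣ j ^ n := by
  rw [← hJ.factorial_mul_dpow_eq_pow hj]
  exact dvd_mul_of_dvd_left
    (Nat.cast_dvd_cast (Nat.dvd_factorial (Nat.pos_of_ne_zero hn) le_rfl)) _

end DividedPowers

namespace TruncatedWittVector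

variable {p n : ℕ} [Fact p.Prime] {R S : Type*} [CommRing R] [CommRing S]

noncomputable def map (f : R →+* S) :
    TruncatedWittVector p n R →+* TruncatedWittVector p n S :=
  (WittVector.truncate n).liftOfSurjective (WittVector.truncate_surjective p n R)
    ⟨(WittVector.truncate n).comp (WittVector.map f), fun w hw => by
      ext i
      have hi : w.coeff i = 0 := by
        rw [← WittVector.coeff_truncate, RingHom.mem_ker.mp hw, coeff_zero]
      simp [WittVector.coeff_truncate, WittVector.map_coeff, hi]⟩

theorem map_truncate (f : R →+* S) (w : WittVector p R) :
    map f (WittVector.truncate n w) = WittVector.truncate n (WittVector.map f w) :=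
  RingHom.liftOfSurjective_comp_apply ..

theorem coeff_map (f : R →+* S) (x : TruncatedWittVector p n R) (i : Fin n) :
    (map f x).coeff i = f (x.coeff i) := by
  obtain ⟨w, rfl⟩ := WittVector.truncate_surjective p n R x
  rw [map_truncate, WittVector.coeff_truncate, WittVector.coeff_truncate, WittVector.map_coeff]

end TruncatedWittVector

namespace WittVector

variable {p : ℕ} [hp : Fact p.Prime]

theorem map_ghostComponent_eq_coeff_zero_pow {R S : Type*} [CommRing R] [CommRing S]
    (g : R →+* S) (hpS : (p : S) = 0) (w : WittVector p R) (n : ℕ) :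
    g (ghostComponent n w) = g (w.coeff 0) ^ p ^ n := by
  simp [ghostComponent_apply, aeval_wittPolynomial, Finset.sum_range_succ', hpS]

theorem ringHom_ext_of_frobenius_surjective {R S : Type*} [CommRing R] [CharP R p] [CommRing S]
    (hR : Function.Surjective (_root_.frobenius R p)) (hpS : IsNilpotent (p : S))
    {g₁ g₂ : WittVector p R →+* S}
    (h : ∀ a, g₁ (teichmuller p a) = g₂ (teichmuller p a)) : g₁ = g₂ := by
  let π := WittVector.map (p := p) (Perfection.coeff R p 0)
  have hπ : Function.Surjective π := map_surjective _ (Perfection.coeff_surjective hR 0)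
  refine (RingHom.cancel_right hπ).mp (eq_of_apply_teichmuller_eq _ _ hpS fun a => ?_)
  simp only [RingHom.comp_apply, π, map_teichmuller, h]

variable {B : Type*} [CommRing B] {J : Ideal B} {k : ℕ}

theorem ghostComponent_eq_zero_of_coeff_mem (hJ : DividedPowers J) (hB : (p : B) ^ k = 0)
    {w : WittVector p B} (hw : ∀ i < k, w.coeff i ∈ J) : ghostComponent k w = 0 := by
  rw [ghostComponent_apply, aeval_wittPolynomial]
  refine Finset.sum_eq_zero fun i hi => ?_
  rcases (Finset.mem_range_succ_iff.mp hi).lt_or_eq with hik | rfl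
  · obtain ⟨c, hc⟩ := hJ.natCast_dvd_pow (hw i hik) (pow_ne_zero (k - i) hp.out.ne_zero)
    rw [hc, Nat.cast_pow, ← mul_assoc, ← pow_add, Nat.add_sub_cancel' hik.le, hB, zero_mul]
  · rw [hB, zero_mul]

theorem truncate_map_mk_surjective :
    Function.Surjective ((truncate k).comp (WittVector.map (p := p) (Ideal.Quotient.mk J))) :=
  (truncate_surjective p k _).comp (map_surjective _ Ideal.Quotient.mk_surjective)

noncomputable def ghostComponentLift (hJ : DividedPowers J) (hB : (p : B) ^ k = 0) :
    TruncatedWittVector p k (B ⧸ J) →+* B :=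
  ((truncate k).comp (WittVector.map (Ideal.Quotient.mk J))).liftOfSurjective
    truncate_map_mk_surjective
    ⟨ghostComponent k, fun w hw => ghostComponent_eq_zero_of_coeff_mem hJ hB fun i hi => by
      rw [← Ideal.Quotient.eq_zero_iff_mem, ← map_coeff,
        ← coeff_truncate (n := k) _ ⟨i, hi⟩,
        ← RingHom.comp_apply, RingHom.mem_ker.mp hw, TruncatedWittVector.coeff_zero]⟩

theorem ghostComponentLift_truncate_map (hJ : DividedPowers J) (hB : (p : B) ^ k = 0)
    (w : WittVector p B) :
    ghostComponentLift hJ hB (truncate k (WittVector.map (Ideal.Quotient.mk J) w)) =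
      ghostComponent k w :=
  RingHom.liftOfSurjective_comp_apply _ _ _ w

theorem mk_ghostComponentLift (hJ : DividedPowers J) (hB : (p : B) ^ k = 0) (hk : 0 < k)
    (hpJ : (p : B ⧸ J) = 0) (z : TruncatedWittVector p k (B ⧸ J)) :
    Ideal.Quotient.mk J (ghostComponentLift hJ hB z) = z.coeff ⟨0, hk⟩ ^ p ^ k := by
  obtain ⟨w, rfl⟩ := truncate_map_mk_surjective z
  rw [RingHom.comp_apply, ghostComponentLift_truncate_map,
    map_ghostComponent_eq_coeff_zero_pow _ hpJ, coeff_truncate, map_coeff]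

end WittVector

theorem DividedPowers.pow_prime_pow_eq_of_sub_mem {p : ℕ} [Fact p.Prime] {B : Type*}
    [CommRing B] {J : Ideal B} (hJ : DividedPowers J) {k : ℕ} (hB : (p : B) ^ k = 0) {x y : B}
    (h : x - y ∈ J) : x ^ p ^ k = y ^ p ^ k := by
  have hxy : Ideal.Quotient.mk J x = Ideal.Quotient.mk J y := Ideal.Quotient.eq.mpr h
  rw [← WittVector.ghostComponent_teichmuller p x k,
    ← WittVector.ghostComponent_teichmuller p y k,
    ← WittVector.ghostComponentLift_truncate_map hJ hB,
    ← WittVector.ghostComponentLift_truncate_map hJ hB, WittVector.map_teichmuller,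
    WittVector.map_teichmuller, hxy]

theorem TruncatedWittVector.ringHom_ext_of_mk_eq {p : ℕ} [Fact p.Prime] {k : ℕ} {A : Type*}
    [CommRing A] [CharP A p] (hA : Function.Surjective (frobenius A p)) {B : Type*} [CommRing B]
    (hB : (p : B) ^ k = 0) {J : Ideal B} (hJ : DividedPowers J)
    {g₁ g₂ : TruncatedWittVector p k A →+* B}
    (h : ∀ x, Ideal.Quotient.mk J (g₁ x) = Ideal.Quotient.mk J (g₂ x)) : g₁ = g₂ := by
  refine (RingHom.cancel_right (WittVector.truncate_surjective p k A)).mp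
    (WittVector.ringHom_ext_of_frobenius_surjective hA ⟨k, hB⟩ fun a => ?_)
  obtain ⟨c, rfl⟩ : ∃ c, c ^ p ^ k = a := by
    obtain ⟨c, hc⟩ := hA.iterate k a
    exact ⟨c, by rw [← iterate_frobenius, hc]⟩
  simp only [RingHom.comp_apply, map_pow]
  exact hJ.pow_prime_pow_eq_of_sub_mem hB (Ideal.Quotient.eq.mp (h _))

theorem witt_dp_envelope_final_in_crystalline_site
    (p : ℕ) [Fact p.Prime] (k : ℕ) (hk : 0 < k)
    (A : Type) [CommRing A] [CharP A p]
    (hfrob : Function.Surjective (frobenius A p))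
    (B : Type) [CommRing B] (hB : (p : B) ^ k = 0)
    (J : Ideal B) (δ : DividedPowers J)
    (f : A →+* B ⧸ J) :
    ∃! ft : TruncatedWittVector p k A →+* B,
      ∀ x : TruncatedWittVector p k A,
        Ideal.Quotient.mk J (ft x) = f ((x.coeff ⟨0, hk⟩) ^ (p ^ k)) := by
  have hpJ : (p : B ⧸ J) = 0 := by rw [← map_natCast f, CharP.cast_eq_zero, map_zero]
  have hlift (x : TruncatedWittVector p k A) :
      Ideal.Quotient.mk J (WittVector.ghostComponentLift δ hB (TruncatedWittVector.map f x)) =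
        f (x.coeff ⟨0, hk⟩ ^ p ^ k) := by
    rw [WittVector.mk_ghostComponentLift δ hB hk hpJ, TruncatedWittVector.coeff_map, map_pow]
  refine ⟨(WittVector.ghostComponentLift δ hB).comp (TruncatedWittVector.map f), hlift,
    fun g hg => ?_⟩
  exact TruncatedWittVector.ringHom_ext_of_mk_eq hfrob hB δ fun x => (hg x).trans (hlift x).symm
end

section
/- Let E_• be the total topos of the constant variable topos k ↦ E (k ∈ ℕ, all transition morphisms identities) — i.e. projective systems in E — with ring A_• a flat normalized Z/p^•-algebra (A_k flat over Z/p^k and A_{k+1}/p^k ≅ A_k). If N_• is a normalized A_•-module (N_{k+1} ⊗ A_k ≅ N_k) and M_• is normalized and Z/p^•-flat, then the abelian group Hom_{A_•}(N_•, M_•) of A_•-linear morphisms of projective systems is p-torsion free. -/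
/-!
STATEMENT 15: Let E_• be the topos of projective systems in a topos E with
ring A_• a flat normalized Z/p^•-algebra (A_k flat over Z/p^k and
A_{k+1}/p^k ≅ A_k).  If N_• is a normalized A_•-module and M_• is normalized
and Z/p^•-flat, then the abelian group Hom_{A_•}(N_•, M_•) of A_•-linear
morphisms of projective systems is p-torsion free.

Formalization: a projective system of rings A_k (k ≥ 1 replaced by k ∈ ℕ)
with transition homomorphisms ρ_k : A_{k+1} → A_k; modules M_k over A_k with
ρ-semilinear additive transition maps; "A_• is a flat normalized Z/p^•-algebra"
means p^k = 0 in A_k, the elementwise flatness criterion over Z/p^k holds,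
and ρ_k is surjective with kernel p^k A_{k+1}; "normalized" for a module
means the transition maps are surjective with kernel p^k M_{k+1};
"Z/p^•-flat" is the elementwise flatness criterion.  A morphism of systems is
a family of A_k-linear maps commuting with the transitions; p-torsion
freeness says: if p·g = 0 then g = 0.
-/

theorem hom_of_normalized_systems_p_torsion_free
    (p : ℕ) (hp : p.Prime)
    -- the flat normalized Z/p^•-algebra A_•
    (A : ℕ → Type u) [∀ k, CommRing (A k)] (ρ : ∀ k, A (k + 1) →+* A k)
    (hAchar : ∀ k, (p : A k) ^ k = 0)
    (hAflat : ∀ k i, i ≤ k → ∀ a : A k, (p : A k) ^ i * a = 0 →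
      ∃ b, a = (p : A k) ^ (k - i) * b)
    (hAnorm : ∀ k, Function.Surjective (ρ k) ∧
      ∀ a, ρ k a = 0 ↔ ∃ b, a = (p : A (k + 1)) ^ k * b)
    -- the normalized module N_•
    (N : ℕ → Type v) [∀ k, AddCommGroup (N k)] [∀ k, Module (A k) (N k)]
    (τ : ∀ k, N (k + 1) →+ N k)
    (hτ : ∀ k (a : A (k + 1)) (x : N (k + 1)), τ k (a • x) = ρ k a • τ k x)
    (hNnorm : ∀ k, Function.Surjective (τ k) ∧
      ∀ x, τ k x = 0 ↔ ∃ y, x = (p ^ k : ℕ) • y)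
    -- the normalized Z/p^•-flat module M_•
    (M : ℕ → Type w) [∀ k, AddCommGroup (M k)] [∀ k, Module (A k) (M k)]
    (σ : ∀ k, M (k + 1) →+ M k)
    (hσ : ∀ k (a : A (k + 1)) (x : M (k + 1)), σ k (a • x) = ρ k a • σ k x)
    (hMtor : ∀ k (x : M k), (p ^ k : ℕ) • x = 0)
    (hMnorm : ∀ k, Function.Surjective (σ k) ∧
      ∀ x, σ k x = 0 ↔ ∃ y, x = (p ^ k : ℕ) • y)
    (hMflat : ∀ k i, i ≤ k → ∀ x : M k, (p ^ i : ℕ) • x = 0 →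
      ∃ y, x = (p ^ (k - i) : ℕ) • y) :
    -- the group of A_•-linear morphisms N_• → M_• is p-torsion free
    ∀ (g : ∀ k, N k →ₗ[A k] M k)
      (hg : ∀ k (x : N (k + 1)), σ k (g (k + 1) x) = g k (τ k x)),
      (∀ k (x : N k), (p : ℕ) • g k x = 0) → ∀ k (x : N k), g k x = 0 := by
  intro g hg hpg k x
  obtain ⟨x', hx'⟩ := (hNnorm k).1 x
  have h1 : (p ^ 1 : ℕ) • g (k + 1) x' = 0 := by
    simpa using hpg (k + 1) x'
  obtain ⟨y, hy⟩ := hMflat (k + 1) 1 (Nat.le_add_left 1 k) _ h1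
  have hker : σ k (g (k + 1) x') = 0 := by
    rw [hy]
    exact ((hMnorm k).2 _).mpr ⟨y, by simp⟩
  rw [← hx', ← hg k x', hker]
end
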